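/- Let i' ≤ i ≤ n be natural numbers and set j = n − i. Regard Ω_{≤i'}(Fin i), the poset of nonempty subsets of Fin i of cardinality at most i' ordered by inclusion, as a (Σi × Σj)-poset with the first factor acting elementwise and the second factor acting trivially. Then the induced Σn-poset Ind_{Σi×Σj}^{Σn} Ω_{≤i'}(Fin i) is Σn-equivariantly order-isomorphic to the Σn-poset Ω_{≤i',i}(Fin n) of flags (U, V) of subsets of Fin n with ∅ ≠ U ⊆ V, |U| ≤ i', |V| = i, ordered by componentwise inclusion; the isomorphism sends the class of (σ, U) to the flag (σ • ι(U), σ • ι(Fin i)), where ι : Fin i ↪ Fin n is the inclusion of the first i elements coming from Fin i ⊕ Fin j ≅ Fin n. -/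

import Mathlib

open Equiv

namespace Stmt3

/-- The standard equivalence `Fin i ⊕ Fin j ≃ Fin n` for `i + j = n`. -/
def finAdd {i j n : ℕ} (h : i + j = n) : Fin i ⊕ Fin j ≃ Fin n :=
  finSumFinEquiv.trans (finCongr h)

/-- The block embedding `Σi × Σj → Σn`. -/
def blockEmb {i j n : ℕ} (h : i + j = n) (p : Perm (Fin i) × Perm (Fin j)) :
    Perm (Fin n) :=
  (finAdd h).permCongr (Equiv.sumCongr p.1 p.2)

/-- The inclusion `Fin i ↪ Fin n` of the first `i` elements, via `Fin i ⊕ Fin j ≃ Fin n`. -/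
def ι {i j n : ℕ} (h : i + j = n) : Fin i → Fin n := fun a => finAdd h (Sum.inl a)

/-- The relation `(g, x) ~ (g·φ(h), h⁻¹ • x)` defining the induced `G`-set. -/
def IndRel {G H P : Type*} [Group G] [Group H] (φ : H → G) (act : H → P → P) :
    G × P → G × P → Prop :=
  fun a b => ∃ h : H, b = (a.1 * φ h, act h⁻¹ a.2)

/-- The induced `G`-set `Ind_H^G P`, a quotient of `G × P`. -/
def Ind {G H P : Type*} [Group G] [Group H] (φ : H → G) (act : H → P → P) : Type _ :=
  Quot (IndRel φ act)

/-- Class of a pair `(g, x)` in the induced `G`-set. -/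
def Ind.mk {G H P : Type*} [Group G] [Group H] (φ : H → G) (act : H → P → P)
    (a : G × P) : Ind φ act :=
  Quot.mk _ a

/-- The `G`-action on `Ind_H^G P`, by left multiplication on the first coordinate. -/
def Ind.smul {G H P : Type*} [Group G] [Group H] {φ : H → G} {act : H → P → P}
    (g : G) : Ind φ act → Ind φ act :=
  Quot.map (fun a => (g * a.1, a.2))
    (by
      rintro ⟨g1, x1⟩ ⟨g2, x2⟩ ⟨h, heq⟩
      refine ⟨h, ?_⟩
      simp only [Prod.ext_iff] at heq ⊢
      exact ⟨by rw [heq.1, mul_assoc], heq.2⟩)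

/-- The order on the induced `G`-poset: `[(g, x)] ≤ [(g', x')]` iff `g⁻¹g'` lies in (the
image of) `H` and `x ≤ (g⁻¹g') • x'`. -/
def indLe {G H P : Type*} [Group G] [Group H] (φ : H → G) (act : H → P → P)
    (le : P → P → Prop) (a b : Ind φ act) : Prop :=
  ∃ (g g' : G) (x x' : P) (hh : H),
    a = Ind.mk φ act (g, x) ∧ b = Ind.mk φ act (g', x') ∧
    g⁻¹ * g' = φ hh ∧ le x (act hh x')

/-- `Ω_{≤m}(α)`: nonempty subsets of `α` of cardinality at most `m`, ordered by
inclusion. -/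
def Omega (m : ℕ) (α : Type*) : Type _ :=
  {U : Finset α // U.Nonempty ∧ U.card ≤ m}

/-- The `(Σi × Σj)`-action on `Ω_{≤i'}(Fin i)`: the first factor acts elementwise and
the second factor acts trivially. -/
def omegaAct {i' i j : ℕ} (p : Perm (Fin i) × Perm (Fin j)) (U : Omega i' (Fin i)) :
    Omega i' (Fin i) :=
  ⟨U.val.image p.1, U.2.1.image p.1, Finset.card_image_le.trans U.2.2⟩

/-- `Ω_{≤i',i}(Fin n)`: flags `(U, V)` of subsets of `Fin n` with `∅ ≠ U ⊆ V`,
`|U| ≤ i'`, `|V| = i`, ordered by componentwise inclusion. -/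
def Flag (i' i n : ℕ) : Type _ :=
  {UV : Finset (Fin n) × Finset (Fin n) //
    UV.1.Nonempty ∧ UV.1 ⊆ UV.2 ∧ UV.1.card ≤ i' ∧ UV.2.card = i}

/-- The elementwise `Σn`-action on flags. -/
def flagAct {i' i n : ℕ} (σ : Perm (Fin n)) (F : Flag i' i n) : Flag i' i n :=
  ⟨(F.val.1.image σ, F.val.2.image σ),
    F.2.1.image σ,
    Finset.image_subset_image F.2.2.1,
    Finset.card_image_le.trans F.2.2.2.1,
    (Finset.card_image_of_injective _ σ.injective).trans F.2.2.2.2⟩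

/-! The map `(σ, U) ↦ (σ ι(U), σ ι(Fin i))` is constant on the classes of `Ind`. It is onto
because `Σn` acts transitively on `i`-subsets of `Fin n`, and it reflects the order (hence is
injective) because `Σi × Σj` is exactly the setwise stabiliser in `Σn` of the block `ι(Fin i)`. -/

lemma image_perm_subset_image_perm_iff {α : Type*} [DecidableEq α] (σ τ : Perm α)
    (s t : Finset α) : s.image σ ⊆ t.image τ ↔ s ⊆ t.image (σ⁻¹ * τ) := by
  have ht : t.image τ = (t.image (σ⁻¹ * τ)).image σ := by
    rw [Finset.image_image, Perm.coe_mul, ← Function.comp_assoc, ← Perm.coe_mul,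
      mul_inv_cancel, Perm.coe_one, Function.id_comp]
  rw [ht, Finset.image_subset_image_iff σ.injective]

section Block

variable {i j n : ℕ} (hij : i + j = n)

lemma ι_injective : Function.Injective (ι hij) :=
  (finAdd hij).injective.comp Sum.inl_injective

lemma blockEmb_apply_ι (p : Perm (Fin i) × Perm (Fin j)) (a : Fin i) :
    blockEmb hij p (ι hij a) = ι hij (p.1 a) := by
  simp [blockEmb, ι, Equiv.permCongr_apply]

lemma image_ι_image_blockEmb (p : Perm (Fin i) × Perm (Fin j)) (s : Finset (Fin i)) :
    (s.image (ι hij)).image (blockEmb hij p) = (s.image p.1).image (ι hij) := by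
  simp only [Finset.image_image]
  exact Finset.image_congr fun a _ => blockEmb_apply_ι hij p a

lemma image_blockEmb_top (p : Perm (Fin i) × Perm (Fin j)) :
    (Finset.univ.image (ι hij)).image (blockEmb hij p) = Finset.univ.image (ι hij) := by
  rw [image_ι_image_blockEmb, Finset.image_univ_equiv]

lemma exists_blockEmb_eq_of_mapsTo {π : Perm (Fin n)}
    (hπ : Set.MapsTo π (Set.range (ι hij)) (Set.range (ι hij))) :
    ∃ p, blockEmb hij p = π := by
  set π' : Perm (Fin i ⊕ Fin j) := (finAdd hij).symm.permCongr π
  have hπ' : Set.MapsTo π' (Set.range Sum.inl) (Set.range Sum.inl) := by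
    rintro _ ⟨a, rfl⟩
    obtain ⟨b, hb⟩ := hπ ⟨a, rfl⟩
    refine ⟨b, ?_⟩
    change Sum.inl b = (finAdd hij).symm (π (ι hij a))
    rw [← hb, ι, Equiv.symm_apply_apply]
  obtain ⟨p, hp⟩ := Perm.mem_sumCongrHom_range_of_perm_mapsTo_inl hπ'
  refine ⟨p, Equiv.ext fun x => ?_⟩
  simp [blockEmb, Equiv.permCongr_apply, ← Perm.sumCongrHom_apply, hp, π']

lemma exists_blockEmb_eq_of_subset_image {π : Perm (Fin n)}
    (hπ : Finset.univ.image (ι hij) ⊆ (Finset.univ.image (ι hij)).image π) :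
    ∃ p, blockEmb hij p = π := by
  have hT := Finset.eq_of_subset_of_card_le hπ
    (Finset.card_image_of_injective _ π.injective).le
  refine exists_blockEmb_eq_of_mapsTo hij ?_
  rintro _ ⟨a, rfl⟩
  have : π (ι hij a) ∈ Finset.univ.image (ι hij) := by
    rw [hT]; exact Finset.mem_image_of_mem _ (Finset.mem_image_of_mem _ (Finset.mem_univ a))
  simpa using this

end Block

section Flags

variable {i' i j n : ℕ} (hij : i + j = n)

def toFlag (σ : Perm (Fin n)) (U : Omega i' (Fin i)) : Flag i' i n :=
  ⟨((U.val.image (ι hij)).image σ, (Finset.univ.image (ι hij)).image σ),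
    (U.2.1.image _).image _,
    Finset.image_subset_image (Finset.image_subset_image (Finset.subset_univ _)),
    by rw [Finset.card_image_of_injective _ σ.injective,
      Finset.card_image_of_injective _ (ι_injective hij)]; exact U.2.2,
    by rw [Finset.card_image_of_injective _ σ.injective,
      Finset.card_image_of_injective _ (ι_injective hij), Finset.card_univ, Fintype.card_fin]⟩

lemma card_toFlag_fst (σ : Perm (Fin n)) (U : Omega i' (Fin i)) :
    (toFlag hij σ U).val.1.card = U.val.card := by
  change ((U.val.image (ι hij)).image σ).card = _
  rw [Finset.card_image_of_injective _ σ.injective,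
    Finset.card_image_of_injective _ (ι_injective hij)]

lemma toFlag_mul_blockEmb (σ : Perm (Fin n)) (p : Perm (Fin i) × Perm (Fin j))
    (U : Omega i' (Fin i)) :
    toFlag hij (σ * blockEmb hij p) (omegaAct p⁻¹ U) = toFlag hij σ U := by
  have hU : (U.val.image p⁻¹.1).image p.1 = U.val := by
    simp [Finset.image_image]
  refine Subtype.ext (Prod.ext ?_ ?_)
  · change ((U.val.image p⁻¹.1).image (ι hij)).image (σ * blockEmb hij p) = _
    rw [Perm.coe_mul, ← Finset.image_image, image_ι_image_blockEmb, hU]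
    rfl
  · change (Finset.univ.image (ι hij)).image (σ * blockEmb hij p) = _
    rw [Perm.coe_mul, ← Finset.image_image, image_blockEmb_top]
    rfl

lemma toFlag_mul (σ τ : Perm (Fin n)) (U : Omega i' (Fin i)) :
    toFlag hij (σ * τ) U = flagAct σ (toFlag hij τ U) :=
  Subtype.ext (Prod.ext (by simp [toFlag, flagAct, Finset.image_image, Function.comp_assoc])
    (by simp [toFlag, flagAct, Finset.image_image, Function.comp_assoc]))

lemma toFlag_subset_toFlag_iff (σ τ : Perm (Fin n)) (U W : Omega i' (Fin i)) :
    ((toFlag hij σ U).val.1 ⊆ (toFlag hij τ W).val.1 ∧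
      (toFlag hij σ U).val.2 ⊆ (toFlag hij τ W).val.2) ↔
    ∃ p, σ⁻¹ * τ = blockEmb hij p ∧ U.val ⊆ W.val.image p.1 := by
  change ((U.val.image (ι hij)).image σ ⊆ (W.val.image (ι hij)).image τ ∧
    (Finset.univ.image (ι hij)).image σ ⊆ (Finset.univ.image (ι hij)).image τ) ↔ _
  simp only [image_perm_subset_image_perm_iff]
  constructor
  · rintro ⟨hU, hT⟩
    obtain ⟨p, hp⟩ := exists_blockEmb_eq_of_subset_image hij hT
    rw [← hp, image_ι_image_blockEmb, Finset.image_subset_image_iff (ι_injective hij)] at hU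
    exact ⟨p, hp.symm, hU⟩
  · rintro ⟨p, hp, hU⟩
    rw [hp, image_ι_image_blockEmb, Finset.image_subset_image_iff (ι_injective hij),
      image_blockEmb_top]
    exact ⟨hU, subset_rfl⟩

lemma toFlag_uncurry_surjective :
    Function.Surjective (Function.uncurry (toFlag (i' := i') hij)) := by
  rintro ⟨⟨U, V⟩, hU, hUV, hUcard, hVcard⟩
  dsimp only at hU hUV hUcard hVcard
  obtain ⟨σ, hσ⟩ := Perm.exists_map_finset_eq (Finset.univ.image (ι hij)) V (by
    rw [Finset.card_image_of_injective _ (ι_injective hij), Finset.card_univ, Fintype.card_fin,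
      hVcard])
  rw [Finset.map_eq_image, Equiv.coe_toEmbedding, Finset.image_image] at hσ
  subst hσ
  have hσι : Function.Injective (σ ∘ ι hij) := σ.injective.comp (ι_injective hij)
  obtain ⟨U₀, -, hU₀⟩ := Finset.subset_image_iff.1 hUV
  refine ⟨(σ, ⟨U₀, ?_, ?_⟩), Subtype.ext (Prod.ext ?_ ?_)⟩
  · exact Finset.image_nonempty.1 (hU₀ ▸ hU)
  · rwa [← Finset.card_image_of_injective _ hσι, hU₀]
  · exact (Finset.image_image).trans hU₀
  · exact Finset.image_image

lemma Ind.mk_eq_of_toFlag_eq {σ τ : Perm (Fin n)} {U W : Omega i' (Fin i)}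
    (h : toFlag hij σ U = toFlag hij τ W) :
    Ind.mk (blockEmb hij) omegaAct (σ, U) = Ind.mk (blockEmb hij) omegaAct (τ, W) := by
  obtain ⟨p, hp, hUW⟩ :=
    (toFlag_subset_toFlag_iff hij σ τ U W).1 ⟨h ▸ subset_rfl, h ▸ subset_rfl⟩
  have hU : U.val = W.val.image p.1 := by
    refine Finset.eq_of_subset_of_card_le hUW ?_
    rw [Finset.card_image_of_injective _ p.1.injective, ← card_toFlag_fst hij τ, ← h,
      card_toFlag_fst]
  refine Quot.sound ⟨p, Prod.ext ?_ (Subtype.ext ?_)⟩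
  · rw [← hp, mul_inv_cancel_left]
  · change W.val = U.val.image p⁻¹.1
    simp [hU, Finset.image_image]

end Flags

theorem statement3_general (i' i j n : ℕ) (hij : i + j = n) :
    ∃ e : Ind (blockEmb hij) (omegaAct (i' := i') (i := i) (j := j)) ≃ Flag i' i n,
      (∀ (σ : Perm (Fin n)) z, e (Ind.smul σ z) = flagAct σ (e z)) ∧
      (∀ a b, indLe (blockEmb hij) omegaAct
          (fun U V : Omega i' (Fin i) => U.val ⊆ V.val) a b ↔
        (e a).val.1 ⊆ (e b).val.1 ∧ (e a).val.2 ⊆ (e b).val.2) ∧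
      (∀ (σ : Perm (Fin n)) (U : Omega i' (Fin i)),
        (e (Ind.mk (blockEmb hij) omegaAct (σ, U))).val =
          ((U.val.image (ι hij)).image σ, (Finset.univ.image (ι hij)).image σ)) := by
  have hf : ∀ a b, IndRel (blockEmb hij) omegaAct a b →
      Function.uncurry (toFlag (i' := i') hij) a = Function.uncurry (toFlag hij) b := by
    rintro ⟨σ, U⟩ _ ⟨p, rfl⟩
    exact (toFlag_mul_blockEmb hij σ p U).symm
  have hbij : Function.Bijective (Quot.lift _ hf) := by
    refine ⟨?_, (Quot.surjective_lift hf).2 (toFlag_uncurry_surjective hij)⟩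
    rintro ⟨σ, U⟩ ⟨τ, W⟩ h
    exact Ind.mk_eq_of_toFlag_eq hij h
  refine ⟨Equiv.ofBijective _ hbij, ?_, ?_, fun σ U => rfl⟩
  · rintro σ ⟨g, U⟩
    exact toFlag_mul hij σ g U
  · intro a b
    constructor
    · rintro ⟨g, g', U, U', p, rfl, rfl, hp, hU⟩
      exact (toFlag_subset_toFlag_iff hij g g' U U').2 ⟨p, hp, hU⟩
    · obtain ⟨⟨g, U⟩, rfl⟩ := Quot.exists_rep a
      obtain ⟨⟨g', U'⟩, rfl⟩ := Quot.exists_rep b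
      intro h
      obtain ⟨p, hp, hU⟩ := (toFlag_subset_toFlag_iff hij g g' U U').1 h
      exact ⟨g, g', U, U', p, rfl, rfl, hp, hU⟩

/-- The induced `Σn`-poset `Ind_{Σi×Σj}^{Σn} Ω_{≤i'}(Fin i)` is `Σn`-equivariantly
order-isomorphic to `Ω_{≤i',i}(Fin n)`; the isomorphism sends the class of `(σ, U)` to
the flag `(σ • ι(U), σ • ι(Fin i))`. -/
theorem statement3 (i' i j n : ℕ) (h1 : i' ≤ i) (hij : i + j = n) :
    ∃ e : Ind (blockEmb hij) (omegaAct (i' := i') (i := i) (j := j)) ≃ Flag i' i n,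
      (∀ (σ : Perm (Fin n)) z, e (Ind.smul σ z) = flagAct σ (e z)) ∧
      (∀ a b, indLe (blockEmb hij) omegaAct
          (fun U V : Omega i' (Fin i) => U.val ⊆ V.val) a b ↔
        (e a).val.1 ⊆ (e b).val.1 ∧ (e a).val.2 ⊆ (e b).val.2) ∧
      (∀ (σ : Perm (Fin n)) (U : Omega i' (Fin i)),
        (e (Ind.mk (blockEmb hij) omegaAct (σ, U))).val =
          ((U.val.image (ι hij)).image σ, (Finset.univ.image (ι hij)).image σ)) :=
  statement3_general i' i j n hij

end Stmt3
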